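/- arXiv:1011.1524 — 9 statements merged into one kernel-verified Lean document; each statement's English description precedes it below -/
import Mathlib

section
/- Every Hausdorff topological group without nontrivial convergent sequences is sequentially Weil complete; that is, every left Cauchy sequence in such a group converges. -/
/-- A sequence in a topological group is *left Cauchy* if for every neighborhood `U`
of the identity there is `k` such that `(u l)⁻¹ * u m ∈ U` whenever `l, m ≥ k`. -/
def IsLeftCauchy {G : Type*} [Group G] [TopologicalSpace G] (u : ℕ → G) : Prop :=
  ∀ U ∈ nhds (1 : G), ∃ k : ℕ, ∀ l m : ℕ, k ≤ l → k ≤ m → (u l)⁻¹ * u m ∈ U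

/-!
The successive quotients `(u n)⁻¹ * u (n + 1)` of a left Cauchy sequence tend to `1`, so by
hypothesis they are eventually constant, and by uniqueness of limits eventually equal to `1`.
Hence `u` itself is eventually constant.
-/

open Filter Topology

theorem IsLeftCauchy.tendsto_inv_mul_succ {G : Type*} [Group G] [TopologicalSpace G]
    {u : ℕ → G} (hu : IsLeftCauchy u) :
    Tendsto (fun n => (u n)⁻¹ * u (n + 1)) atTop (𝓝 1) := by
  intro U hU
  obtain ⟨k, hk⟩ := hu U hU
  exact mem_atTop_sets.mpr ⟨k, fun n hn => hk n (n + 1) hn (hn.trans n.le_succ)⟩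

theorem eq_of_tendsto_of_forall_ge_eq {X : Type*} [TopologicalSpace X] [T2Space X]
    {a : ℕ → X} {x : X} {N : ℕ} (hN : ∀ n ≥ N, a n = a N) (ha : Tendsto a atTop (𝓝 x)) :
    ∀ n ≥ N, a n = x := fun n hn =>
  (hN n hn).trans (tendsto_nhds_unique (tendsto_atTop_of_eventually_const hN) ha)

theorem forall_ge_eq_of_forall_ge_succ_eq {α : Type*} {u : ℕ → α} {N : ℕ}
    (h : ∀ n ≥ N, u (n + 1) = u n) : ∀ n ≥ N, u n = u N := by
  intro n hn
  induction n, hn using Nat.le_induction with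
  | base => rfl
  | succ n hn ih => exact (h n hn).trans ih

theorem stmt0_general {G : Type*} [Group G] [TopologicalSpace G] [T2Space G]
    (hno : ∀ (a : ℕ → G) (x : G), Filter.Tendsto a Filter.atTop (nhds x) →
      ∃ N : ℕ, ∀ n ≥ N, a n = a N)
    (u : ℕ → G) (hu : IsLeftCauchy u) :
    ∃ x : G, Filter.Tendsto u Filter.atTop (nhds x) := by
  have hsteps := hu.tendsto_inv_mul_succ
  obtain ⟨N, hN⟩ := hno _ 1 hsteps
  have hstep : ∀ n ≥ N, u (n + 1) = u n := fun n hn =>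
    (inv_mul_eq_one.mp (eq_of_tendsto_of_forall_ge_eq hN hsteps n hn)).symm
  exact ⟨u N, tendsto_atTop_of_eventually_const (forall_ge_eq_of_forall_ge_succ_eq hstep)⟩

/-- Every Hausdorff topological group without nontrivial convergent sequences
(i.e. every convergent sequence is eventually constant) is sequentially Weil complete:
every left Cauchy sequence converges. -/
theorem stmt0 {G : Type*} [Group G] [TopologicalSpace G] [IsTopologicalGroup G] [T2Space G]
    (hno : ∀ (a : ℕ → G) (x : G), Filter.Tendsto a Filter.atTop (nhds x) →
      ∃ N : ℕ, ∀ n ≥ N, a n = a N)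
    (u : ℕ → G) (hu : IsLeftCauchy u) :
    ∃ x : G, Filter.Tendsto u Filter.atTop (nhds x) :=
  stmt0_general hno u hu
end

section
/- If f : ℕ → ℕ\{0} is a bounded weight function, then a sequence in an abelian topological group is f-summable if and only if it is f_1*-summable, where f_1 is the constant function 1. That is, subseries convergence of ∑ a_n implies summability of {z(n)·a_n} for every z : ℕ → ℤ with |z(n)| ≤ f(n). -/
/-- Partial sums of a sequence in an abelian group. -/
def partialSums {G : Type*} [AddCommGroup G] (b : ℕ → G) (m : ℕ) : G :=
  ∑ n ∈ Finset.range (m + 1), b n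

/-!
Weighting `a` by integer coefficients `z` and taking the limit of the partial sums is additive
in `z`, so the coefficient sequences for which the partial sums converge form an additive
subgroup of `ℕ → ℤ`. A coefficient sequence bounded by `k` is the difference of two sums of
`k` sequences with values in `{0, 1}`: writing `t⁺` for `max t 0`, one has
`t⁺ = #{i < k | i < t}` whenever `t ≤ k`, and `t = t⁺ - (-t)⁺`.
-/

open Filter Topology Finset

section Coefficients

variable {G : Type*} [AddCommGroup G]

theorem partialSums_add (b c : ℕ → G) :
    partialSums (b + c) = partialSums b + partialSums c := by
  funext m
  simp only [partialSums, Pi.add_apply, sum_add_distrib]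

theorem partialSums_neg (b : ℕ → G) : partialSums (-b) = -partialSums b := by
  funext m
  simp only [partialSums, Pi.neg_apply, sum_neg_distrib]

variable [TopologicalSpace G] [IsTopologicalAddGroup G]

def convergentCoeffs (a : ℕ → G) : AddSubgroup (ℕ → ℤ) where
  carrier := {z | ∃ x, Tendsto (partialSums fun n => z n • a n) atTop (𝓝 x)}
  zero_mem' := ⟨0, tendsto_const_nhds.congr fun m => by simp [partialSums]⟩
  add_mem' := by
    rintro z w ⟨x, hx⟩ ⟨y, hy⟩
    refine ⟨x + y, ?_⟩
    have hzw : (fun n => (z + w) n • a n) = (fun n => z n • a n) + fun n => w n • a n := by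
      funext n
      exact add_smul _ _ _
    rw [hzw, partialSums_add]
    exact hx.add hy
  neg_mem' := by
    rintro z ⟨x, hx⟩
    refine ⟨-x, ?_⟩
    have hz : (fun n => (-z) n • a n) = -fun n => z n • a n := by
      funext n
      exact neg_smul _ _
    rw [hz, partialSums_neg]
    exact hx.neg

end Coefficients

theorem sum_range_ite_lt_eq_toNat {t : ℤ} {k : ℕ} (h : t ≤ k) :
    ∑ i ∈ range k, (if (i : ℤ) < t then (1 : ℤ) else 0) = t.toNat := by
  rw [sum_boole]
  have hfilter : (range k).filter (fun i : ℕ => (i : ℤ) < t) = range t.toNat := by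
    ext i
    simp only [mem_filter, mem_range]
    omega
  rw [hfilter, card_range]

theorem AddSubgroup.mem_of_natAbs_le {S : AddSubgroup (ℕ → ℤ)}
    (hS : ∀ w : ℕ → ℕ, (∀ n, w n ≤ 1) → (fun n => (w n : ℤ)) ∈ S)
    {z : ℕ → ℤ} {k : ℕ} (hz : ∀ n, (z n).natAbs ≤ k) : z ∈ S := by
  let u (i : ℕ) (n : ℕ) : ℕ := if (i : ℤ) < z n then 1 else 0
  let v (i : ℕ) (n : ℕ) : ℕ := if (i : ℤ) < -z n then 1 else 0
  have hdecomp :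
      z = ∑ i ∈ range k, (fun n => (u i n : ℤ)) - ∑ i ∈ range k, fun n => (v i n : ℤ) := by
    funext n
    have hzk := hz n
    simp only [u, v, Pi.sub_apply, Finset.sum_apply, Nat.cast_ite, Nat.cast_one, Nat.cast_zero]
    rw [sum_range_ite_lt_eq_toNat (t := z n) (by omega),
      sum_range_ite_lt_eq_toNat (t := -z n) (by omega), Int.toNat_sub_toNat_neg]
  have hu (i : ℕ) : (fun n => (u i n : ℤ)) ∈ S := hS _ fun n => by dsimp only [u]; split <;> simp
  have hv (i : ℕ) : (fun n => (v i n : ℤ)) ∈ S := hS _ fun n => by dsimp only [v]; split <;> simp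
  rw [hdecomp]
  exact sub_mem (sum_mem fun i _ => hu i) (sum_mem fun i _ => hv i)

theorem stmt7_general {G : Type*} [AddCommGroup G] [TopologicalSpace G] [IsTopologicalAddGroup G]
    (f : ℕ → ℕ) (hfpos : ∀ n, 0 < f n) (hfbd : ∃ k : ℕ, ∀ n, f n ≤ k)
    (a : ℕ → G) :
    (∀ z : ℕ → ℤ, (∀ n, (z n).natAbs ≤ f n) →
      ∃ x : G, Filter.Tendsto (partialSums (fun n => z n • a n)) Filter.atTop (nhds x)) ↔
    (∀ z : ℕ → ℕ, (∀ n, z n ≤ 1) →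
      ∃ x : G, Filter.Tendsto (partialSums (fun n => z n • a n)) Filter.atTop (nhds x)) := by
  have hcast (w : ℕ → ℕ) : (fun n => (w n : ℤ) • a n) = fun n => w n • a n :=
    funext fun n => natCast_zsmul _ _
  constructor
  · intro h w hw
    simpa only [hcast] using h (fun n => w n) fun n => by simpa using (hw n).trans (hfpos n)
  · intro h z hz
    obtain ⟨k, hk⟩ := hfbd
    have h01 (w : ℕ → ℕ) (hw : ∀ n, w n ≤ 1) : (fun n => (w n : ℤ)) ∈ convergentCoeffs a := by
      show ∃ x, _
      simpa only [hcast] using h w hw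
    exact AddSubgroup.mem_of_natAbs_le h01 fun n => (hz n).trans (hk n)

/-- If `f : ℕ → ℕ \ {0}` is a bounded weight function, then a sequence `{a_n}` in an
abelian topological group is `f`-summable (partial sums of `{z n • a n}` converge for
every `z : ℕ → ℤ` with `|z n| ≤ f n`) if and only if it is `f₁*`-summable (the same for
every `z : ℕ → ℕ` with `z n ≤ 1`, i.e. subseries convergence of `∑ a_n`). -/
theorem stmt7 {G : Type*} [AddCommGroup G] [TopologicalSpace G] [IsTopologicalAddGroup G]
    (f : ℕ → ℕ) (hfpos : ∀ n, 0 < f n) (hfbd : ∃ k : ℕ, ∀ n, f n ≤ k)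
    (a : ℕ → G) (ha : Function.Injective a) :
    (∀ z : ℕ → ℤ, (∀ n, (z n).natAbs ≤ f n) →
      ∃ x : G, Filter.Tendsto (partialSums (fun n => z n • a n)) Filter.atTop (nhds x)) ↔
    (∀ z : ℕ → ℕ, (∀ n, z n ≤ 1) →
      ∃ x : G, Filter.Tendsto (partialSums (fun n => z n • a n)) Filter.atTop (nhds x)) :=
  stmt7_general f hfpos hfbd a
end

section
/- Let {U_n : n ∈ ℕ} be a family of subsets of a group G with e ∈ U_{n+1}³ ⊆ U_n for every n ∈ ℕ. If φ : ℕ → ℕ is an injection, 0 ≤ l ≤ m are integers and s = min{φ(n) : l ≤ n ≤ m} > 0, then the product U_{φ(l)} · U_{φ(l+1)} · ⋯ · U_{φ(m)} is contained in U_{s-1}. -/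
open Pointwise

/-!
Choose the index `k` at which `φ` is smallest. By injectivity `φ` is strictly larger on both
sides of `k`, so by induction on the length each of the two partial products lies in `U (φ k)`,
and the whole product lies in `U (φ k) ^ 3 ⊆ U (φ k - 1)`.
-/

theorem exists_eq_append_cons_lt_of_nodup_map {α β : Type*} [LinearOrder β] {f : α → β}
    {l : List α} (hl : l ≠ []) (hf : (l.map f).Nodup) :
    ∃ A k B, l = A ++ k :: B ∧ ∀ a ∈ A ++ B, f k < f a := by
  obtain ⟨k, hk⟩ := Option.ne_none_iff_exists'.1 (mt (List.argmin_eq_none (f := f)).1 hl)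
  obtain ⟨A, B, rfl⟩ := List.mem_iff_append.1 (List.argmin_mem hk)
  refine ⟨A, k, B, rfl, fun a ha => lt_of_le_of_ne (List.le_of_mem_argmin
    (by simp only [List.mem_append, List.mem_cons] at ha ⊢; tauto) hk) fun hfa => ?_⟩
  rw [List.map_append, List.map_cons, List.nodup_middle, List.nodup_cons, ← List.map_append] at hf
  exact hf.1 (hfa ▸ List.mem_map_of_mem ha)

section CubeFamily

variable {G : Type*} [Group G] {U : ℕ → Set G}
  (hU : ∀ n : ℕ, (1 : G) ∈ U (n + 1) * U (n + 1) * U (n + 1) ∧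
    U (n + 1) * U (n + 1) * U (n + 1) ⊆ U n)
include hU

theorem one_mem_of_cube_subset (n : ℕ) : (1 : G) ∈ U n :=
  (hU n).2 (hU n).1

theorem antitone_of_cube_subset : Antitone U := by
  refine antitone_nat_of_succ_le fun n x hx => (hU n).2 ?_
  have h1 := one_mem_of_cube_subset hU (n + 1)
  simpa using Set.mul_mem_mul (Set.mul_mem_mul hx h1) h1

theorem mul_mul_mem_of_lt {k t : ℕ} (hkt : t < k) {a b c : G} (ha : a ∈ U k) (hb : b ∈ U k)
    (hc : c ∈ U k) : a * b * c ∈ U t := by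
  obtain ⟨n, rfl⟩ := Nat.exists_eq_add_of_lt hkt
  exact antitone_of_cube_subset hU (Nat.le_add_right t n)
    ((hU (t + n)).2 (Set.mul_mem_mul (Set.mul_mem_mul ha hb) hc))

theorem prod_map_mem_of_nodup_map {φ : ℕ → ℕ} {v : ℕ → G} (ns : List ℕ) (t : ℕ)
    (hφ : (ns.map φ).Nodup) (ht : ∀ n ∈ ns, t < φ n) (hv : ∀ n ∈ ns, v n ∈ U (φ n)) :
    (ns.map v).prod ∈ U t := by
  rcases eq_or_ne ns [] with rfl | hne
  · exact one_mem_of_cube_subset hU t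
  obtain ⟨A, k, B, rfl, hk⟩ := exists_eq_append_cons_lt_of_nodup_map hne hφ
  rw [List.map_append, List.map_cons, List.prod_append, List.prod_cons, ← mul_assoc]
  have hAB : (A.map φ).Nodup ∧ (B.map φ).Nodup := by
    simp only [List.map_append, List.map_cons, List.nodup_append, List.nodup_cons] at hφ
    exact ⟨hφ.1, hφ.2.1.2⟩
  refine mul_mul_mem_of_lt hU (ht k (by simp))
    (prod_map_mem_of_nodup_map A (φ k) hAB.1 (fun n hn => hk n (by simp [hn]))
      fun n hn => hv n (by simp [hn]))
    (hv k (by simp))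
    (prod_map_mem_of_nodup_map B (φ k) hAB.2 (fun n hn => hk n (by simp [hn]))
      fun n hn => hv n (by simp [hn]))
termination_by ns.length
decreasing_by all_goals subst_vars; simp only [List.length_append, List.length_cons]; omega

end CubeFamily

theorem stmt8_general {G : Type*} [Group G] (U : ℕ → Set G)
    (hU : ∀ n : ℕ, (1 : G) ∈ U (n + 1) * U (n + 1) * U (n + 1) ∧
      U (n + 1) * U (n + 1) * U (n + 1) ⊆ U n)
    (φ : ℕ → ℕ) (hφ : Function.Injective φ)
    (l m s : ℕ) (hs : 0 < s)
    (hmin : ∀ n : ℕ, l ≤ n → n ≤ m → s ≤ φ n)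
    (v : ℕ → G) (hv : ∀ n : ℕ, l ≤ n → n ≤ m → v n ∈ U (φ n)) :
    ((List.range' l (m + 1 - l)).map v).prod ∈ U (s - 1) := by
  have hbounds : ∀ n ∈ List.range' l (m + 1 - l), l ≤ n ∧ n ≤ m := fun n hn => by
    rw [List.mem_range'_1] at hn; omega
  refine prod_map_mem_of_nodup_map hU _ _ ((List.nodup_range' ..).map hφ)
    (fun n hn => ?_) fun n hn => hv n (hbounds n hn).1 (hbounds n hn).2
  have := hmin n (hbounds n hn).1 (hbounds n hn).2
  omega

/-- Reshuffling lemma: let `{U_n}` be subsets of a group `G` with `1 ∈ U_{n+1}³ ⊆ U_n`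
for all `n`.  If `φ : ℕ → ℕ` is injective, `l ≤ m`, and
`s = min {φ n : l ≤ n ≤ m} > 0`, then any product `v l * v (l+1) * ⋯ * v m` with
`v n ∈ U (φ n)` lies in `U (s - 1)`. -/
theorem stmt8 {G : Type*} [Group G] (U : ℕ → Set G)
    (hU : ∀ n : ℕ, (1 : G) ∈ U (n + 1) * U (n + 1) * U (n + 1) ∧
      U (n + 1) * U (n + 1) * U (n + 1) ⊆ U n)
    (φ : ℕ → ℕ) (hφ : Function.Injective φ)
    (l m s : ℕ) (hlm : l ≤ m) (hs : 0 < s)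
    (hmin : ∀ n : ℕ, l ≤ n → n ≤ m → s ≤ φ n)
    (hatt : ∃ n : ℕ, l ≤ n ∧ n ≤ m ∧ φ n = s)
    (v : ℕ → G) (hv : ∀ n : ℕ, l ≤ n → n ≤ m → v n ∈ U (φ n)) :
    ((List.range' l (m + 1 - l)).map v).prod ∈ U (s - 1) :=
  stmt8_general U hU φ hφ l m s hs hmin v hv
end

section
/- Let G be a metric group with an open base {U_n : n ∈ ℕ} at the identity satisfying U_{n+1}³ ⊆ U_n for all n, and let f : ℕ → (ω+1)\{0}. If {a_n : n ∈ ℕ} is a faithfully indexed sequence such that {a_n^z : z ∈ ℤ, |z| ≤ f(n)} ⊆ U_n for every n ∈ ℕ, then {a_n} is unconditionally f-Cauchy productive. -/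
/-! A product of elements `g_i ∈ U_{n_i}` with pairwise distinct indices `n_i > N` lies in `U_N`:
split the product at the factor of least index `M`; by induction both remaining blocks lie in
`U_M`, so the whole product lies in `U_M³ ⊆ U_{M-1} ⊆ U_N`. Once `φ j > N` for all `j ≥ k`,
every block of consecutive factors `a_{φ j} ^ z j` with `j ≥ k` is such a product, so the partial
products are left Cauchy. -/

open Pointwise Filter Topology

section CubeChain

variable {G : Type*} [Group G] {U : ℕ → Set G}

theorem antitone_of_cube_subset_s9 (hUmem : ∀ n, (1 : G) ∈ U n)
    (hU3 : ∀ n, U (n + 1) * U (n + 1) * U (n + 1) ⊆ U n) : Antitone U :=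
  antitone_nat_of_succ_le fun n =>
    ((Set.subset_mul_left _ (hUmem _)).trans (Set.subset_mul_left _ (hUmem _))).trans (hU3 n)

theorem prod_map_mem_of_nodup_of_lt {ι : Type*} (hUmem : ∀ n, (1 : G) ∈ U n)
    (hU3 : ∀ n, U (n + 1) * U (n + 1) * U (n + 1) ⊆ U n)
    (idx : ι → ℕ) (x : ι → G) (hx : ∀ i, x i ∈ U (idx i))
    (L : List ι) (hnd : (L.map idx).Nodup) {N : ℕ} (hN : ∀ i ∈ L, N < idx i) :
    (L.map x).prod ∈ U N := by
  by_cases hne : L = []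
  · simpa [hne] using hUmem N
  classical
  obtain ⟨i, hiL, hmin⟩ := L.toFinset.exists_min_image idx (by simpa using hne)
  rw [List.mem_toFinset] at hiL
  obtain ⟨L₁, L₂, rfl⟩ := List.append_of_mem hiL
  simp only [List.map_append, List.map_cons, List.nodup_append, List.nodup_cons,
    List.mem_cons, List.mem_map] at hnd
  obtain ⟨hnd₁, ⟨hi₂, hnd₂⟩, hdisj⟩ := hnd
  have lt_of_mem₁ : ∀ j ∈ L₁, idx i < idx j := fun j hj =>
    lt_of_le_of_ne (hmin j (by simp [hj]))
      (fun h => hdisj _ ⟨j, hj, rfl⟩ _ (Or.inl h.symm) rfl)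
  have lt_of_mem₂ : ∀ j ∈ L₂, idx i < idx j := fun j hj =>
    lt_of_le_of_ne (hmin j (by simp [hj])) (fun h => hi₂ ⟨j, hj, h.symm⟩)
  have hlen₁ : L₁.length < (L₁ ++ i :: L₂).length := by
    simp only [List.length_append, List.length_cons]; omega
  have hlen₂ : L₂.length < (L₁ ++ i :: L₂).length := by
    simp only [List.length_append, List.length_cons]; omega
  have h₁ := prod_map_mem_of_nodup_of_lt hUmem hU3 idx x hx L₁ hnd₁ lt_of_mem₁
  have h₂ := prod_map_mem_of_nodup_of_lt hUmem hU3 idx x hx L₂ hnd₂ lt_of_mem₂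
  obtain ⟨k, hk⟩ := Nat.exists_eq_add_of_lt (hN i hiL)
  rw [hk] at h₁ h₂
  have hprod : (L₁.map x).prod * x i * (L₂.map x).prod ∈ U (N + k) :=
    hU3 _ (Set.mul_mem_mul (Set.mul_mem_mul h₁ (hk ▸ hx i)) h₂)
  simpa [mul_assoc] using antitone_of_cube_subset_s9 hUmem hU3 (N.le_add_right k) hprod
termination_by L.length

end CubeChain

theorem inv_mul_prod_range_eq_prod_range' {G : Type*} [Group G] (c : ℕ → G) {l m : ℕ}
    (hlm : l ≤ m) :
    ((List.range (l + 1)).map c).prod⁻¹ * ((List.range (m + 1)).map c).prod =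
      ((List.range' (l + 1) (m - l)).map c).prod := by
  have hsplit : List.range (m + 1) = List.range' 0 (l + 1) ++ List.range' (l + 1) (m - l) := by
    have h := List.range'_append (s := 0) (m := l + 1) (n := m - l) (step := 1)
    rw [zero_add, one_mul, show l + 1 + (m - l) = m + 1 by omega] at h
    rw [List.range_eq_range', h]
  rw [hsplit, List.range_eq_range', List.map_append, List.prod_append, inv_mul_cancel_left]

theorem isLeftCauchy_of_forall_le {G : Type*} [Group G] [TopologicalSpace G]
    [IsTopologicalGroup G] {u : ℕ → G}
    (h : ∀ V ∈ 𝓝 (1 : G), ∃ k, ∀ l m, k ≤ l → l ≤ m → (u l)⁻¹ * u m ∈ V) :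
    IsLeftCauchy u := by
  intro V hV
  obtain ⟨k, hk⟩ := h (V ∩ V⁻¹) (inter_mem hV (inv_mem_nhds_one G hV))
  refine ⟨k, fun l m hl hm => ?_⟩
  rcases le_total l m with hlm | hml
  · exact (hk l m hl hlm).1
  · simpa using (hk m l hm hml).2

theorem stmt9_general {G : Type*} [Group G] [TopologicalSpace G] [IsTopologicalGroup G]
    (U : ℕ → Set G) (hUmem : ∀ n, (1 : G) ∈ U n)
    (hbase : ∀ V ∈ nhds (1 : G), ∃ n, U n ⊆ V)
    (hU3 : ∀ n, U (n + 1) * U (n + 1) * U (n + 1) ⊆ U n)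
    (f : ℕ → ℕ∞)
    (a : ℕ → G)
    (hin : ∀ n, ∀ z : ℤ, ((z.natAbs : ℕ∞) ≤ f n) → a n ^ z ∈ U n) :
    ∀ φ : ℕ → ℕ, Function.Bijective φ →
      ∀ z : ℕ → ℤ, (∀ n, ((z n).natAbs : ℕ∞) ≤ f (φ n)) →
        IsLeftCauchy (fun m => ((List.range (m + 1)).map (fun n => a (φ n) ^ z n)).prod) := by
  intro φ hφ z hz
  refine isLeftCauchy_of_forall_le fun V hV => ?_
  obtain ⟨N, hN⟩ := hbase V hV
  obtain ⟨k, hk⟩ := eventually_atTop.1 (hφ.1.nat_tendsto_atTop.eventually_gt_atTop N)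
  refine ⟨k, fun l m hkl hlm => hN ?_⟩
  rw [inv_mul_prod_range_eq_prod_range' _ hlm]
  refine prod_map_mem_of_nodup_of_lt hUmem hU3 φ _ (fun n => hin _ _ (hz n)) _
    ((List.nodup_range' _).map hφ.1) fun j hj => hk j ?_
  have := (List.mem_range'_1.1 hj).1
  omega

/-- Let `G` be a metrizable topological group with an open base `{U_n}` at the identity
satisfying `U_{n+1}³ ⊆ U_n`, and let `f : ℕ → ℕ∞` be a weight function (with `f n ≥ 1`;
the value `⊤ = ω` imposes no restriction).  If `{a_n}` is a faithfully indexed sequence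
with `{a_n ^ z : |z| ≤ f n} ⊆ U n` for every `n`, then `{a_n}` is unconditionally
`f`-Cauchy productive: for every bijection `φ : ℕ → ℕ` and every `z : ℕ → ℤ` with
`|z n| ≤ f (φ n)`, the partial products of `{a_{φ n} ^ z n}` are left Cauchy. -/
theorem stmt9 {G : Type*} [Group G] [TopologicalSpace G] [IsTopologicalGroup G]
    [TopologicalSpace.MetrizableSpace G]
    (U : ℕ → Set G) (hUopen : ∀ n, IsOpen (U n)) (hUmem : ∀ n, (1 : G) ∈ U n)
    (hbase : ∀ V ∈ nhds (1 : G), ∃ n, U n ⊆ V)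
    (hU3 : ∀ n, U (n + 1) * U (n + 1) * U (n + 1) ⊆ U n)
    (f : ℕ → ℕ∞) (hf : ∀ n, 1 ≤ f n)
    (a : ℕ → G) (ha : Function.Injective a)
    (hin : ∀ n, ∀ z : ℤ, ((z.natAbs : ℕ∞) ≤ f n) → a n ^ z ∈ U n) :
    ∀ φ : ℕ → ℕ, Function.Bijective φ →
      ∀ z : ℕ → ℤ, (∀ n, ((z n).natAbs : ℕ∞) ≤ f (φ n)) →
        IsLeftCauchy (fun m => ((List.range (m + 1)).map (fun n => a (φ n) ^ z n)).prod) :=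
  stmt9_general U hUmem hbase hU3 f a hin
end

section
/- Every non-discrete metric group contains an unconditionally f-Cauchy productive sequence for every weight function f : ℕ → ℕ\{0}. -/
open Filter Topology Function Pointwise

theorem exists_injective_forall_mem_of_infinite {α : Type*} {s : ℕ → Set α}
    (hs : ∀ n, (s n).Infinite) : ∃ a : ℕ → α, Injective a ∧ ∀ n, a n ∈ s n := by
  classical
  choose t hts hcard using fun n => (hs n).exists_subset_card_eq (n + 1)
  obtain ⟨a, ha, hat⟩ := (Finset.all_card_le_biUnion_card_iff_exists_injective t).mp
    fun I => by
      rcases I.eq_empty_or_nonempty with rfl | hI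
      · simp
      calc I.card ≤ (Finset.range (I.max' hI + 1)).card :=
            Finset.card_le_card fun i hi =>
              Finset.mem_range.mpr (Nat.lt_succ_of_le (I.le_max' i hi))
        _ = (t (I.max' hI)).card := by rw [Finset.card_range, hcard]
        _ ≤ (I.biUnion t).card :=
            Finset.card_le_card (Finset.subset_biUnion_of_mem t (I.max'_mem hI))
  exact ⟨a, ha, fun n => hts n (hat n)⟩

theorem exists_injective_forall_mem_nhds {X : Type*} [TopologicalSpace X] [T1Space X] {x : X}
    [NeBot (𝓝[≠] x)] {s : ℕ → Set X} (hs : ∀ n, s n ∈ 𝓝 x) :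
    ∃ a : ℕ → X, Injective a ∧ ∀ n, a n ∈ s n :=
  exists_injective_forall_mem_of_infinite fun n => infinite_of_mem_nhds x (hs n)

theorem IsTopologicalGroup.exists_antitone_basis_nhds_one_mul_mul {G : Type*} [TopologicalSpace G]
    [Group G] [IsTopologicalGroup G] [FirstCountableTopology G] :
    ∃ V : ℕ → Set G, (𝓝 1).HasAntitoneBasis V ∧ ∀ n, V (n + 1) * V (n + 1) * V (n + 1) ⊆ V n := by
  obtain ⟨u, hu, hmul⟩ := IsTopologicalGroup.exists_antitone_basis_nhds_one (G := G)
  refine ⟨fun n => u (2 * n), hu.comp_strictMono (strictMono_mul_left_of_pos two_pos), fun n => ?_⟩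
  have hsub : u (2 * (n + 1)) ⊆ u (2 * n + 1) := hu.antitone (by omega)
  calc u (2 * (n + 1)) * u (2 * (n + 1)) * u (2 * (n + 1))
      ⊆ u (2 * n + 1) * u (2 * n + 1) := Set.mul_subset_mul (hmul _) hsub
    _ ⊆ u (2 * n) := hmul _

theorem eventually_forall_zpow_mem {G : Type*} [TopologicalSpace G] [Group G]
    [IsTopologicalGroup G] {U : Set G} (hU : U ∈ 𝓝 1) (m : ℕ) :
    ∀ᶠ x in 𝓝 (1 : G), ∀ j : ℤ, j.natAbs ≤ m → x ^ j ∈ U := by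
  have hfin : {j : ℤ | j.natAbs ≤ m}.Finite :=
    (Set.finite_Icc (-(m : ℤ)) m).subset fun j (hj : j.natAbs ≤ m) => by
      rw [Set.mem_Icc]; omega
  refine (eventually_all_finite hfin).mpr fun j _ => ?_
  exact (continuous_zpow j).tendsto' 1 1 (one_zpow j) hU

theorem List.prod_map_mem_of_nodup_levels_lt {M ι : Type*} [Monoid M] {V : ℕ → Set M}
    (hV : Antitone V) (h1 : ∀ n, (1 : M) ∈ V n)
    (hmul : ∀ n, V (n + 1) * V (n + 1) * V (n + 1) ⊆ V n)
    {c : ι → M} {level : ι → ℕ} (hc : ∀ i, c i ∈ V (level i + 1)) {d K : ℕ} {l : List ι}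
    (hnd : (l.map level).Nodup) (hl : ∀ i ∈ l, K ≤ level i ∧ level i < K + d) :
    (l.map c).prod ∈ V K := by
  induction d generalizing K l with
  | zero =>
    obtain rfl : l = [] := List.eq_nil_iff_forall_not_mem.mpr fun i hi => by
      have := hl i hi; omega
    simpa using h1 K
  | succ d ih =>
    by_cases hK : ∃ i ∈ l, level i = K
    · obtain ⟨i, hi, rfl⟩ := hK
      obtain ⟨l₁, l₂, rfl⟩ := List.append_of_mem hi
      rw [List.map_append, List.map_cons, List.nodup_middle, List.nodup_cons,
        ← List.map_append] at hnd
      have hrest : ∀ j ∈ l₁ ++ l₂, level i + 1 ≤ level j ∧ level j < level i + 1 + d := by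
        intro j hj
        have := hl j (by simp only [List.mem_append, List.mem_cons] at hj ⊢; tauto)
        have : level j ≠ level i := fun h => hnd.1 (h ▸ List.mem_map_of_mem hj)
        omega
      have hprod₁ := ih (hnd.2.sublist ((List.sublist_append_left l₁ l₂).map level))
        fun j hj => hrest j (List.mem_append_left l₂ hj)
      have hprod₂ := ih (hnd.2.sublist ((List.sublist_append_right l₁ l₂).map level))
        fun j hj => hrest j (List.mem_append_right l₁ hj)
      rw [List.map_append, List.map_cons, List.prod_append, List.prod_cons, ← mul_assoc]
      exact hmul _ (Set.mul_mem_mul (Set.mul_mem_mul hprod₁ (hc i)) hprod₂)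
    · push Not at hK
      refine hV (Nat.le_succ K) (ih hnd fun i hi => ?_)
      have := hl i hi
      have := hK i hi
      omega

theorem List.prod_map_mem_of_nodup_levels {M ι : Type*} [Monoid M] {V : ℕ → Set M}
    (hV : Antitone V) (h1 : ∀ n, (1 : M) ∈ V n)
    (hmul : ∀ n, V (n + 1) * V (n + 1) * V (n + 1) ⊆ V n)
    {c : ι → M} {level : ι → ℕ} (hc : ∀ i, c i ∈ V (level i + 1)) {l : List ι}
    (hl : (l.map level).Nodup) {K : ℕ} (hK : ∀ i ∈ l, K ≤ level i) :
    (l.map c).prod ∈ V K := by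
  refine List.prod_map_mem_of_nodup_levels_lt (d := (l.map level).sum + 1) hV h1 hmul hc hl
    fun i hi => ⟨hK i hi, ?_⟩
  have := List.le_sum_of_mem (List.mem_map_of_mem (f := level) hi)
  omega

theorem isLeftCauchy_prod_range {G : Type*} [TopologicalSpace G] [Group G] [IsTopologicalGroup G]
    {V : ℕ → Set G} (hV : (𝓝 1).HasAntitoneBasis V)
    (hmul : ∀ n, V (n + 1) * V (n + 1) * V (n + 1) ⊆ V n)
    {c : ℕ → G} {φ : ℕ → ℕ} (hφ : Injective φ) (hc : ∀ n, c n ∈ V (φ n + 1)) :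
    IsLeftCauchy fun m => ((List.range (m + 1)).map c).prod := by
  have hprod_range' : ∀ l m, l ≤ m → (((List.range (l + 1)).map c).prod)⁻¹ *
      ((List.range (m + 1)).map c).prod = ((List.range' (l + 1) (m - l)).map c).prod := by
    intro l m hlm
    have hsplit : List.range (m + 1) = List.range (l + 1) ++ List.range' (l + 1) (m - l) := by
      simpa [List.range_eq_range', show l + 1 + (m - l) = m + 1 by omega] using
        (List.range'_append_1 (s := 0) (m := l + 1) (n := m - l)).symm
    rw [inv_mul_eq_iff_eq_mul, ← List.prod_append, ← List.map_append, hsplit]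
  intro U hU
  obtain ⟨K, hK⟩ := hV.mem_iff.mp (inter_mem hU (inv_mem_nhds_one G hU))
  obtain ⟨k, hk⟩ := eventually_atTop.mp (hφ.nat_tendsto_atTop.eventually_ge_atTop K)
  have htail : ∀ l m, k ≤ l → l ≤ m → (((List.range (l + 1)).map c).prod)⁻¹ *
      ((List.range (m + 1)).map c).prod ∈ V K := by
    intro l m hkl hlm
    rw [hprod_range' l m hlm]
    refine List.prod_map_mem_of_nodup_levels hV.antitone (fun n => mem_of_mem_nhds (hV.mem n))
      hmul hc ((List.nodup_range' (s := l + 1) (n := m - l)).map hφ) fun n hn => hk n ?_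
    have := List.mem_range'_1.mp hn
    omega
  refine ⟨k, fun l m hl hm => ?_⟩
  rcases le_total l m with hlm | hml
  · exact (hK (htail l m hl hlm)).1
  · simpa using (hK (htail m l hm hml)).2

theorem stmt10_general {G : Type*} [Group G] [TopologicalSpace G] [IsTopologicalGroup G]
    [TopologicalSpace.MetrizableSpace G]
    (hnd : ¬ DiscreteTopology G) (f : ℕ → ℕ) :
    ∃ a : ℕ → G, Function.Injective a ∧
      ∀ φ : ℕ → ℕ, Function.Bijective φ →
        ∀ z : ℕ → ℤ, (∀ n, (z n).natAbs ≤ f (φ n)) →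
          IsLeftCauchy (fun m => ((List.range (m + 1)).map (fun n => a (φ n) ^ z n)).prod) := by
  obtain ⟨V, hV, hmul⟩ := IsTopologicalGroup.exists_antitone_basis_nhds_one_mul_mul (G := G)
  have : NeBot (𝓝[≠] (1 : G)) := ⟨fun h => hnd (discreteTopology_iff_isOpen_singleton_one.mpr
    ((isOpen_singleton_iff_punctured_nhds 1).mpr h))⟩
  obtain ⟨a, ha, haV⟩ := exists_injective_forall_mem_nhds fun k =>
    eventually_forall_zpow_mem (hV.mem (k + 1)) (f k)
  exact ⟨a, ha, fun φ hφ z hz =>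
    isLeftCauchy_prod_range hV hmul hφ.1 fun n => haV (φ n) (z n) (hz n)⟩

/-- Every non-discrete metrizable topological group contains, for every weight function
`f : ℕ → ℕ \ {0}`, an unconditionally `f`-Cauchy productive sequence: a faithfully
indexed sequence `{a_n}` such that for every bijection `φ : ℕ → ℕ` and every
`z : ℕ → ℤ` with `|z n| ≤ f (φ n)`, the partial products of `{a_{φ n} ^ z n}`
are left Cauchy. -/
theorem stmt10 {G : Type*} [Group G] [TopologicalSpace G] [IsTopologicalGroup G]
    [TopologicalSpace.MetrizableSpace G]
    (hnd : ¬ DiscreteTopology G) (f : ℕ → ℕ) (hf : ∀ n, 0 < f n) :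
    ∃ a : ℕ → G, Function.Injective a ∧
      ∀ φ : ℕ → ℕ, Function.Bijective φ →
        ∀ z : ℕ → ℤ, (∀ n, (z n).natAbs ≤ f (φ n)) →
          IsLeftCauchy (fun m => ((List.range (m + 1)).map (fun n => a (φ n) ^ z n)).prod) :=
  stmt10_general hnd f
end

section
/- Let G be a topological group with a linear topology (a base at the identity consisting of open subgroups). For a faithfully indexed sequence A = {a_n} in G, the following are equivalent: (i) A converges to the identity; (ii) A is f-Cauchy productive for some weight function f; (iii) A is f-Cauchy productive for every weight function f; (iv) A is unconditionally f_ω-Cauchy productive. -/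
/-- `A` is `f`-Cauchy productive for a weight function `f : ℕ → ℕ∞`:
for every `z : ℕ → ℤ` with `|z n| ≤ f n` (no restriction when `f n = ⊤ = ω`),
the partial products of `{a_n ^ z n}` are left Cauchy. -/
def IsFCauchyProductive {G : Type*} [Group G] [TopologicalSpace G]
    (a : ℕ → G) (f : ℕ → ℕ∞) : Prop :=
  ∀ z : ℕ → ℤ, (∀ n, ((z n).natAbs : ℕ∞) ≤ f n) →
    IsLeftCauchy (fun m => ((List.range (m + 1)).map (fun n => a n ^ z n)).prod)

open Filter Topology

def IsLinearGroupTopology (G : Type*) [Group G] [TopologicalSpace G] : Prop :=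
  ∀ V ∈ 𝓝 (1 : G), ∃ H : Subgroup G, IsOpen (H : Set G) ∧ (H : Set G) ⊆ V

namespace IsLinearGroupTopology

variable {G : Type*} [Group G] [TopologicalSpace G]

theorem tendsto_zpow (hlin : IsLinearGroupTopology G)
    {a : ℕ → G} (ha : Tendsto a atTop (𝓝 1)) (z : ℕ → ℤ) :
    Tendsto (fun n => a n ^ z n) atTop (𝓝 1) := by
  intro U hU
  obtain ⟨H, hHopen, hHU⟩ := hlin U hU
  exact (ha.eventually_mem (hHopen.mem_nhds H.one_mem)).mono fun n hn =>
    hHU (H.zpow_mem hn (z n))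

theorem isLeftCauchy_partialProd (hlin : IsLinearGroupTopology G)
    {c : ℕ → G} (hc : Tendsto c atTop (𝓝 1)) :
    IsLeftCauchy (fun m => ((List.range (m + 1)).map c).prod) := by
  intro U hU
  obtain ⟨H, hHopen, hHU⟩ := hlin U hU
  obtain ⟨k, hk⟩ := eventually_atTop.mp (hc (hHopen.mem_nhds H.one_mem))
  set P : ℕ → G := fun m => ((List.range (m + 1)).map c).prod
  have hblock : ∀ l, k ≤ l → (P k)⁻¹ * P l ∈ H := by
    intro l hl
    induction l, hl using Nat.le_induction with
    | base => simp
    | succ l hkl ih =>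
      have hstep : P (l + 1) = P l * c (l + 1) := List.prod_range_succ c (l + 1)
      rw [hstep, ← mul_assoc]
      exact H.mul_mem ih (hk (l + 1) (by omega))
  refine ⟨k, fun l m hl hm => hHU ?_⟩
  have hsplit : (P l)⁻¹ * P m = ((P k)⁻¹ * P l)⁻¹ * ((P k)⁻¹ * P m) := by group
  rw [hsplit]
  exact H.mul_mem (H.inv_mem (hblock l hl)) (hblock m hm)

theorem isFCauchyProductive (hlin : IsLinearGroupTopology G)
    {a : ℕ → G} (ha : Tendsto a atTop (𝓝 1)) (f : ℕ → ℕ∞) :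
    IsFCauchyProductive a f := fun z _ =>
  hlin.isLeftCauchy_partialProd (hlin.tendsto_zpow ha z)

end IsLinearGroupTopology

theorem IsFCauchyProductive.tendsto_one {G : Type*} [Group G] [TopologicalSpace G]
    {a : ℕ → G} {f : ℕ → ℕ∞} (hf : ∀ n, 1 ≤ f n) (ha : IsFCauchyProductive a f) :
    Tendsto a atTop (𝓝 1) := by
  intro U hU
  obtain ⟨k, hk⟩ := ha (fun _ => 1) (fun n => by simpa using hf n) U hU
  rw [mem_map, mem_atTop_sets]
  refine ⟨k + 1, fun n hn => ?_⟩
  obtain ⟨l, rfl⟩ : ∃ l, n = l + 1 := ⟨n - 1, by omega⟩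
  have hconsec := hk l (l + 1) (by omega) (by omega)
  dsimp only at hconsec
  rwa [List.prod_range_succ _ (l + 1), inv_mul_cancel_left, zpow_one] at hconsec

theorem stmt12_general {G : Type*} [Group G] [TopologicalSpace G]
    (hlin : ∀ V ∈ nhds (1 : G), ∃ H : Subgroup G, IsOpen (H : Set G) ∧ (H : Set G) ⊆ V)
    (a : ℕ → G) :
    (Filter.Tendsto a Filter.atTop (nhds (1 : G)) ↔
      ∃ f : ℕ → ℕ∞, (∀ n, 1 ≤ f n) ∧ IsFCauchyProductive a f) ∧
    (Filter.Tendsto a Filter.atTop (nhds (1 : G)) ↔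
      ∀ f : ℕ → ℕ∞, (∀ n, 1 ≤ f n) → IsFCauchyProductive a f) ∧
    (Filter.Tendsto a Filter.atTop (nhds (1 : G)) ↔
      ∀ φ : ℕ → ℕ, Function.Bijective φ →
        IsFCauchyProductive (fun n => a (φ n)) (fun _ => (⊤ : ℕ∞))) := by
  have productive : ∀ {b : ℕ → G}, Tendsto b atTop (𝓝 1) → ∀ f, IsFCauchyProductive b f :=
    IsLinearGroupTopology.isFCauchyProductive hlin
  refine ⟨⟨fun ha => ⟨1, fun _ => le_rfl, productive ha 1⟩, fun ⟨f, hf, ha⟩ => ha.tendsto_one hf⟩,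
    ⟨fun ha f _ => productive ha f, fun h => (h 1 fun _ => le_rfl).tendsto_one fun _ => le_rfl⟩,
    ⟨fun ha φ hφ => productive (ha.comp hφ.injective.nat_tendsto_atTop) _,
      fun h => (h id Function.bijective_id).tendsto_one fun _ => le_top⟩⟩

/-- For a topological group with a linear topology (a neighborhood base at the identity
consisting of open subgroups) and a faithfully indexed sequence `A = {a_n}`, the
following are equivalent: (i) `A` converges to the identity; (ii) `A` is `f`-Cauchy
productive for some weight function `f`; (iii) `A` is `f`-Cauchy productive for every
weight function `f`; (iv) `A` is unconditionally `f_ω`-Cauchy productive. -/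
theorem stmt12 {G : Type*} [Group G] [TopologicalSpace G] [IsTopologicalGroup G]
    (hlin : ∀ V ∈ nhds (1 : G), ∃ H : Subgroup G, IsOpen (H : Set G) ∧ (H : Set G) ⊆ V)
    (a : ℕ → G) (ha : Function.Injective a) :
    (Filter.Tendsto a Filter.atTop (nhds (1 : G)) ↔
      ∃ f : ℕ → ℕ∞, (∀ n, 1 ≤ f n) ∧ IsFCauchyProductive a f) ∧
    (Filter.Tendsto a Filter.atTop (nhds (1 : G)) ↔
      ∀ f : ℕ → ℕ∞, (∀ n, 1 ≤ f n) → IsFCauchyProductive a f) ∧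
    (Filter.Tendsto a Filter.atTop (nhds (1 : G)) ↔
      ∀ φ : ℕ → ℕ, Function.Bijective φ →
        IsFCauchyProductive (fun n => a (φ n)) (fun _ => (⊤ : ℕ∞))) :=
  stmt12_general hlin a
end

section
/- A linear sequentially Weil complete topological group contains an unconditionally f_ω-productive sequence if and only if it contains a nontrivial convergent sequence. -/
/-!
If `u n → x` is not eventually constant, the quotients `(u n)⁻¹ * u (n + 1)` tend to `1` without
being eventually `1`. In a T₁ space their values other than `1` form an infinite set meeting the
complement of each neighbourhood of `1` in a finite set, so any enumeration of it is an injective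
sequence `a → 1`. In a linear group every open subgroup `H` eventually contains all
`a (φ n) ^ z n`, so the partial products eventually stay in one left coset of `H`: they are left
Cauchy, hence convergent.

Conversely, the partial products of an injective `a` converge (take `φ = id`, `z = 1`) and cannot
be eventually constant, since that would force `a (N + 1) = 1 = a (N + 2)`.
-/

open Filter Topology Function

section Enumeration

variable {X : Type*} [TopologicalSpace X] [T1Space X]

theorem exists_injective_tendsto_of_frequently_ne {c : ℕ → X} {x : X}
    (hc : Tendsto c atTop (𝓝 x)) (hne : ∃ᶠ n in atTop, c n ≠ x) :
    ∃ a : ℕ → X, Injective a ∧ Tendsto a atTop (𝓝 x) := by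
  set T := Set.range c \ {x}
  have hT_diff_finite : ∀ V ∈ 𝓝 x, (T \ V).Finite := by
    intro V hV
    obtain ⟨N, hN⟩ := eventually_atTop.mp (hc hV)
    refine ((Set.finite_Iio N).image c).subset ?_
    rintro _ ⟨⟨⟨n, rfl⟩, -⟩, hnV⟩
    exact ⟨n, lt_of_not_ge fun h => hnV (hN n h), rfl⟩
  have hT_infinite : T.Infinite := by
    intro hT
    have hTc : Tᶜ ∈ 𝓝 x := hT.isClosed.isOpen_compl.mem_nhds fun hx => hx.2 rfl
    exact not_frequently.mpr ((hc.eventually_mem hTc).mono fun n hn h => hn ⟨⟨n, rfl⟩, h⟩) hne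
  have : Infinite T := hT_infinite.to_subtype
  set a : ℕ → X := fun n => Infinite.natEmbedding T n
  have ha : Injective a := Subtype.val_injective.comp (Infinite.natEmbedding T).injective
  have haT : ∀ n, a n ∈ T := fun n => (Infinite.natEmbedding T n).2
  refine ⟨a, ha, ?_⟩
  rw [← Nat.cofinite_eq_atTop]
  intro V hV
  exact ((hT_diff_finite V hV).preimage ha.injOn).subset fun n hn => ⟨haT n, hn⟩

end Enumeration

section PartialProducts

variable {G : Type*} [Group G]

def prodUpTo (b : ℕ → G) (m : ℕ) : G :=
  ((List.range (m + 1)).map b).prod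

theorem prodUpTo_succ (b : ℕ → G) (m : ℕ) : prodUpTo b (m + 1) = prodUpTo b m * b (m + 1) :=
  List.prod_range_succ b (m + 1)

theorem not_exists_forall_prodUpTo_eq_of_injective {a : ℕ → G} (ha : Injective a) :
    ¬ ∃ N : ℕ, ∀ n ≥ N, prodUpTo a n = prodUpTo a N := by
  rintro ⟨N, hN⟩
  have h₁ : a (N + 1) = 1 := by
    have h := prodUpTo_succ a N
    rwa [hN (N + 1) (by omega), left_eq_mul] at h
  have h₂ : a (N + 2) = 1 := by
    have h := prodUpTo_succ a (N + 1)
    rwa [hN (N + 2) (by omega), hN (N + 1) (by omega), left_eq_mul] at h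
  exact absurd (ha (h₁.trans h₂.symm)) (by omega)

theorem inv_mul_prodUpTo_mem {b : ℕ → G} {H : Subgroup G} {N : ℕ} (hb : ∀ n > N, b n ∈ H)
    {m : ℕ} (hm : N ≤ m) : (prodUpTo b N)⁻¹ * prodUpTo b m ∈ H := by
  induction m, hm using Nat.le_induction with
  | base => simp
  | succ m hm ih =>
    rw [prodUpTo_succ, ← mul_assoc]
    exact H.mul_mem ih (hb (m + 1) (by omega))

variable [TopologicalSpace G]

theorem isLeftCauchy_prodUpTo
    (hlin : ∀ V ∈ 𝓝 (1 : G), ∃ H : Subgroup G, IsOpen (H : Set G) ∧ (H : Set G) ⊆ V)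
    {b : ℕ → G} (hb : ∀ H : Subgroup G, IsOpen (H : Set G) → ∀ᶠ n in atTop, b n ∈ H) :
    IsLeftCauchy (prodUpTo b) := by
  intro U hU
  obtain ⟨H, hH, hHU⟩ := hlin U hU
  obtain ⟨N, hN⟩ := eventually_atTop.mp (hb H hH)
  refine ⟨N, fun l m hl hm => hHU ?_⟩
  have h := H.mul_mem (H.inv_mem (inv_mul_prodUpTo_mem (fun n hn => hN n hn.le) hl))
    (inv_mul_prodUpTo_mem (fun n hn => hN n hn.le) hm)
  simpa [mul_assoc] using h

end PartialProducts

section Quotients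

variable {G : Type*} [Group G]

theorem tendsto_inv_mul_succ_one [TopologicalSpace G] [IsTopologicalGroup G] {u : ℕ → G}
    {x : G} (hu : Tendsto u atTop (𝓝 x)) :
    Tendsto (fun n => (u n)⁻¹ * u (n + 1)) atTop (𝓝 1) := by
  simpa using hu.inv.mul (hu.comp (tendsto_add_atTop_nat 1))

theorem frequently_inv_mul_succ_ne_one {u : ℕ → G} (hu : ¬ ∃ N : ℕ, ∀ n ≥ N, u n = u N) :
    ∃ᶠ n in atTop, (u n)⁻¹ * u (n + 1) ≠ 1 := by
  refine fun h => hu ?_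
  obtain ⟨N, hN⟩ := eventually_atTop.mp h
  refine ⟨N, fun n hn => ?_⟩
  induction n, hn using Nat.le_induction with
  | base => rfl
  | succ n hn ih => rw [← inv_mul_eq_one.mp (not_not.mp (hN n hn)), ih]

end Quotients

/-- A linear (base of open subgroups at the identity) sequentially Weil complete
Hausdorff topological group contains an unconditionally `f_ω`-productive sequence
(a faithfully indexed sequence `{a_n}` such that for every bijection `φ` and every
`z : ℕ → ℤ` the partial products of `{a_{φ n} ^ z n}` converge) if and only if it
contains a nontrivial convergent sequence (one which is not eventually constant). -/
theorem stmt13 {G : Type*} [Group G] [TopologicalSpace G] [IsTopologicalGroup G] [T2Space G]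
    (hlin : ∀ V ∈ nhds (1 : G), ∃ H : Subgroup G, IsOpen (H : Set G) ∧ (H : Set G) ⊆ V)
    (hcomp : ∀ u : ℕ → G, IsLeftCauchy u → ∃ x : G, Filter.Tendsto u Filter.atTop (nhds x)) :
    (∃ a : ℕ → G, Function.Injective a ∧
      ∀ φ : ℕ → ℕ, Function.Bijective φ → ∀ z : ℕ → ℤ,
        ∃ x : G, Filter.Tendsto
          (fun m => ((List.range (m + 1)).map (fun n => a (φ n) ^ z n)).prod)
          Filter.atTop (nhds x)) ↔
    (∃ (u : ℕ → G) (x : G), Filter.Tendsto u Filter.atTop (nhds x) ∧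
      ¬ ∃ N : ℕ, ∀ n ≥ N, u n = u N) := by
  constructor
  · rintro ⟨a, ha, hprod⟩
    obtain ⟨x, hx⟩ := hprod id bijective_id 1
    simp only [id, Pi.one_apply, zpow_one] at hx
    exact ⟨prodUpTo a, x, hx, not_exists_forall_prodUpTo_eq_of_injective ha⟩
  · rintro ⟨u, x, hu, hu_nonconst⟩
    obtain ⟨a, ha, ha_one⟩ := exists_injective_tendsto_of_frequently_ne
      (tendsto_inv_mul_succ_one hu) (frequently_inv_mul_succ_ne_one hu_nonconst)
    refine ⟨a, ha, fun φ hφ z => hcomp _ (isLeftCauchy_prodUpTo hlin fun H hH => ?_)⟩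
    exact ((ha_one.comp hφ.1.nat_tendsto_atTop).eventually_mem (hH.mem_nhds H.one_mem)).mono
      fun n hn => H.zpow_mem hn (z n)
end

section
/- Let H be the subgroup of bounded sequences in ℤ^ℕ (with the product topology, ℤ discrete), i.e., H = {h ∈ ℤ^ℕ : ∃ k ∈ ℕ, ∀ i, |h(i)| ≤ k}. Then for every unbounded function f : ℕ → ℕ\{0}, H contains no f-summable sequence. In particular, if {h_n} is any faithfully indexed sequence in H and f is unbounded, then there exists z : ℕ → ℤ with |z(n)| ≤ f(n) for all n such that the partial sums of {z(n)·h_n} do not converge in H. -/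
/-!
Convergence in `ℤ^ℕ` is coordinatewise eventual constancy. If some coordinate `i` is nonzero in
infinitely many `h n`, the multipliers `z n = [h n i ≠ 0]` make that coordinate change infinitely
often. Otherwise every coordinate is nonzero in only finitely many `h n`, and we take `z = f` on a
sparse set `n₀ < n₁ < ⋯` and `z = 0` elsewhere. Let `i_k` be a coordinate with `h n_k i_k ≠ 0`;
choose `n_{k+1}` past the last `n` with `h n i_k ≠ 0` and with `f n_{k+1}` larger than
`n_k + ∑_{p ≤ n_k} f p ‖h p‖_∞`. Then coordinate `i_{k+1}` of the limit is
`f n_{k+1} h n_{k+1} i_{k+1}` plus the earlier contributions, so its absolute value exceeds `n_k`: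
the limit is unbounded.
-/

open Filter Finset Topology

lemma exists_gt_lt_apply_notMem {f : ℕ → ℕ} (hf : ∀ k, ∃ n, k < f n) {s : Set ℕ} (hs : s.Finite)
    (B M : ℕ) : ∃ n, B < n ∧ M < f n ∧ n ∉ s := by
  obtain ⟨C, hC⟩ := ((Set.finite_Iic B).union hs |>.image f).bddAbove
  obtain ⟨n, hn⟩ := hf (max M C)
  rw [max_lt_iff] at hn
  have hn' : n ∉ Set.Iic B ∪ s := fun hns => (hC (Set.mem_image_of_mem f hns)).not_gt hn.2
  simp only [Set.mem_union, Set.mem_Iic, not_or, not_le] at hn'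
  exact ⟨n, hn'.1, hn.1, hn'.2⟩

lemma eventually_eq_zero_of_tendsto_sum_range {G : Type*} [AddCommGroup G] [TopologicalSpace G]
    [DiscreteTopology G] {a : ℕ → G} {c : G}
    (hc : Tendsto (fun m => ∑ n ∈ range (m + 1), a n) atTop (𝓝 c)) : ∀ᶠ n in atTop, a n = 0 := by
  have hev : ∀ᶠ m in atTop, ∑ n ∈ range m, a n = c := by
    rw [← tendsto_pure, ← nhds_discrete]
    exact (tendsto_add_atTop_iff_nat 1).mp hc
  filter_upwards [hev, (tendsto_add_atTop_nat 1).eventually hev] with m hm hm1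
  rwa [sum_range_succ, hm, add_eq_left] at hm1

lemma eq_sum_range_add_of_tendsto {G : Type*} [AddCommMonoid G] [TopologicalSpace G] [T2Space G]
    {a : ℕ → G} {c : G} {m n : ℕ} (hmn : m < n)
    (hc : Tendsto (fun k => ∑ p ∈ range (k + 1), a p) atTop (𝓝 c))
    (ha : ∀ p, m < p → p ≠ n → a p = 0) : c = ∑ p ∈ range (m + 1), a p + a n := by
  refine tendsto_nhds_unique hc (tendsto_atTop_of_eventually_const (i₀ := n) fun k hk => ?_)
  rw [← sum_range_add_sum_Ico _ (by omega : m + 1 ≤ k + 1),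
    sum_eq_single_of_mem (s := Ico (m + 1) (k + 1)) n (by simp; omega)
      fun p hp hpn => ha p (by simp at hp; omega) hpn]

lemma natAbs_sum_mul_le {ι : Type*} (s : Finset ι) {z u : ι → ℤ} {f K : ι → ℕ}
    (hz : ∀ p, (z p).natAbs ≤ f p) (hu : ∀ p, (u p).natAbs ≤ K p) :
    (∑ p ∈ s, z p * u p).natAbs ≤ ∑ p ∈ s, f p * K p := by
  refine (Int.natAbs_sum_le s _).trans (sum_le_sum fun p _ => ?_)
  rw [Int.natAbs_mul]
  exact Nat.mul_le_mul (hz p) (hu p)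

lemma le_natAbs_add_of_tendsto {z u : ℕ → ℤ} {f K : ℕ → ℕ} {c : ℤ} {m n : ℕ} (hmn : m < n)
    (hc : Tendsto (fun k => ∑ p ∈ range (k + 1), z p * u p) atTop (𝓝 c))
    (ha : ∀ p, m < p → p ≠ n → z p * u p = 0) (hz : ∀ p, (z p).natAbs ≤ f p)
    (hu : ∀ p, (u p).natAbs ≤ K p) (hzn : z n = f n) (hun : u n ≠ 0) :
    f n ≤ c.natAbs + ∑ p ∈ range (m + 1), f p * K p := by
  have hlim := eq_sum_range_add_of_tendsto hmn hc ha
  have hhead := natAbs_sum_mul_le (range (m + 1)) hz hu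
  have hlast : f n ≤ (z n * u n).natAbs := by
    rw [hzn, Int.natAbs_mul, Int.natAbs_natCast]
    exact Nat.le_mul_of_pos_right _ (Int.natAbs_pos.mpr hun)
  have htri := Int.natAbs_sub_le c (∑ p ∈ range (m + 1), z p * u p)
  rw [← eq_sub_of_add_eq' hlim.symm] at htri
  omega

lemma exists_seq_forall_rel_succ {α : Type*} {r : α → α → Prop} (hr : ∀ a, ∃ b, r a b) (a₀ : α) :
    ∃ s : ℕ → α, ∀ k, r (s k) (s (k + 1)) := by
  choose next hnext using hr
  exact ⟨fun k => next^[k] a₀, fun k => by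
    simpa only [Function.iterate_succ_apply'] using hnext (next^[k] a₀)⟩

variable {ι : Type*} {f : ℕ → ℕ} {h : ℕ → ι → ℤ}

lemma exists_natAbs_le_not_tendsto_of_frequently (hfpos : ∀ n, 0 < f n) {i : ι}
    (hi : ∃ᶠ n in atTop, h n i ≠ 0) :
    ∃ z : ℕ → ℤ, (∀ n, (z n).natAbs ≤ f n) ∧
      ∀ x, ¬ Tendsto (fun m => ∑ n ∈ range (m + 1), z n • h n) atTop (𝓝 x) := by
  refine ⟨fun n => if h n i = 0 then 0 else 1, fun n => ?_, fun x hx => ?_⟩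
  · dsimp only
    split_ifs
    exacts [Nat.zero_le _, hfpos n]
  have hxi := tendsto_pi_nhds.mp hx i
  simp only [Finset.sum_apply, Pi.smul_apply, smul_eq_mul] at hxi
  obtain ⟨n, hn, hn0⟩ := (hi.and_eventually (eventually_eq_zero_of_tendsto_sum_range hxi)).exists
  simp [hn] at hn0

lemma exists_natAbs_le_forall_tendsto_unbounded {K : ℕ → ℕ} (hK : ∀ n i, (h n i).natAbs ≤ K n)
    (hf : ∀ k, ∃ n, k < f n) (hzero : {n | h n = 0}.Finite)
    (hev : ∀ i, ∀ᶠ n in atTop, h n i = 0) :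
    ∃ z : ℕ → ℤ, (∀ n, (z n).natAbs ≤ f n) ∧
      ∀ x, Tendsto (fun m => ∑ n ∈ range (m + 1), z n • h n) atTop (𝓝 x) →
        ∀ k : ℕ, ∃ i, k < (x i).natAbs := by
  choose N hN using fun i => eventually_atTop.mp (hev i)
  have : Nonempty ι := by
    obtain ⟨n, hn⟩ := hzero.infinite_compl.nonempty
    exact ⟨(Function.ne_iff.mp hn).choose⟩
  let c n := Classical.epsilon fun i => h n i ≠ 0
  have hc : ∀ n, h n ≠ 0 → h n (c n) ≠ 0 := fun n hn =>
    Classical.epsilon_spec (Function.ne_iff.mp hn)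
  let W m := ∑ p ∈ range (m + 1), f p * K p
  have hstep : ∀ m, ∃ n, max m (N (c m)) < n ∧ m + W m < f n ∧ h n ≠ 0 := fun m =>
    exists_gt_lt_apply_notMem hf hzero _ _
  obtain ⟨s, hs⟩ := exists_seq_forall_rel_succ hstep 0
  have hmono : StrictMono s := strictMono_nat_of_lt_succ fun k =>
    (le_max_left _ _).trans_lt (hs k).1
  classical
  let z : ℕ → ℤ := fun p => if p ∈ Set.range s then f p else 0
  have hz : ∀ p, (z p).natAbs ≤ f p := fun p => by
    simp only [z]
    split_ifs <;> simp
  refine ⟨z, hz, fun x hx k => ⟨c (s (k + 1)), ?_⟩⟩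
  set i := c (s (k + 1))
  -- beyond `s (k + 2)` coordinate `i` vanishes, and between consecutive `s j` the multiplier does
  have hvanish : ∀ p, s k < p → p ≠ s (k + 1) → z p * h p i = 0 := by
    intro p hkp hpn
    by_cases hp : p ∈ Set.range s
    · obtain ⟨j, rfl⟩ := hp
      have hkj : k + 2 ≤ j := by
        have := hmono.lt_iff_lt.mp hkp
        have : j ≠ k + 1 := fun hj => hpn (by rw [hj])
        omega
      have hNi : N i ≤ s j :=
        ((le_max_right _ _).trans_lt (hs (k + 1)).1).le.trans (hmono.monotone hkj)
      rw [hN _ _ hNi, mul_zero]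
    · simp only [z, if_neg hp, zero_mul]
  have hxi := tendsto_pi_nhds.mp hx i
  simp only [Finset.sum_apply, Pi.smul_apply, smul_eq_mul] at hxi
  have hbig : f (s (k + 1)) ≤ (x i).natAbs + W (s k) :=
    le_natAbs_add_of_tendsto (hmono (lt_add_one k)) hxi hvanish hz (fun p => hK p i)
      (if_pos ⟨k + 1, rfl⟩) (hc _ (hs k).2.2)
  have hk : k ≤ s k := hmono.id_le k
  have := (hs k).2.1
  omega

/-- Let `H` be the subgroup of bounded sequences in `ℤ^ℕ` (product topology, `ℤ`
discrete).  For every unbounded weight function `f : ℕ → ℕ \ {0}` and every faithfully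
indexed sequence `{h_n}` of elements of `H`, there is a multiplier `z : ℕ → ℤ` with
`|z n| ≤ f n` for all `n` such that the partial sums of `{z n • h n}` do not converge
to any element of `H`; that is, `H` contains no `f`-summable sequence. -/
theorem stmt15 (H : Set (ℕ → ℤ))
    (hH : H = {h : ℕ → ℤ | ∃ k : ℕ, ∀ i : ℕ, (h i).natAbs ≤ k})
    (f : ℕ → ℕ) (hfpos : ∀ n, 0 < f n) (hfunb : ∀ k : ℕ, ∃ n, k < f n)
    (h : ℕ → (ℕ → ℤ)) (hmem : ∀ n, h n ∈ H) (hinj : Function.Injective h) :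
    ∃ z : ℕ → ℤ, (∀ n, (z n).natAbs ≤ f n) ∧
      ¬ ∃ x ∈ H, Filter.Tendsto (fun m => ∑ n ∈ Finset.range (m + 1), z n • h n)
        Filter.atTop (nhds x) := by
  subst hH
  by_cases hA : ∃ i, ∃ᶠ n in atTop, h n i ≠ 0
  · obtain ⟨i, hi⟩ := hA
    obtain ⟨z, hz, hx⟩ := exists_natAbs_le_not_tendsto_of_frequently hfpos hi
    exact ⟨z, hz, fun ⟨x, _, hxlim⟩ => hx x hxlim⟩
  · simp only [not_exists, not_frequently, not_not] at hA
    choose K hK using hmem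
    have hzero : {n | h n = 0}.Finite := (Set.finite_singleton 0).preimage hinj.injOn
    obtain ⟨z, hz, hunb⟩ := exists_natAbs_le_forall_tendsto_unbounded hK hfunb hzero hA
    refine ⟨z, hz, fun ⟨x, ⟨k, hk⟩, hxlim⟩ => ?_⟩
    obtain ⟨i, hi⟩ := hunb x hxlim k
    exact (hk i).not_gt hi
end

section
/- Let (X, <) be a linearly ordered set and s ∈ Seq(X) a finite sequence with distinct consecutive neighbors. Then for every subsequence s' of s, the number of local extrema of s' is at most the number of local extrema of s. -/
/-- Index `i` is a local maximum of the finite sequence `(s 0, …, s k)`. -/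
def IsLocMax {X : Type*} [LinearOrder X] (k : ℕ) (s : ℕ → X) (i : ℕ) : Prop :=
  i ≤ k ∧ (i ≠ 0 → s (i - 1) < s i) ∧ (i ≠ k → s (i + 1) < s i)

/-- Index `i` is a local minimum of the finite sequence `(s 0, …, s k)`. -/
def IsLocMin {X : Type*} [LinearOrder X] (k : ℕ) (s : ℕ → X) (i : ℕ) : Prop :=
  i ≤ k ∧ (i ≠ 0 → s i < s (i - 1)) ∧ (i ≠ k → s i < s (i + 1))

/-- The set of indices of local extrema of the finite sequence `(s 0, …, s k)`. -/
def ExtSet {X : Type*} [LinearOrder X] (k : ℕ) (s : ℕ → X) : Set ℕ :=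
  {i | IsLocMax k s i ∨ IsLocMin k s i}

/-!
Send every local extremum `i` of `s ∘ ι` to a local extremum of `s` of the same kind lying
strictly between `ι (i - 1)` and `ι (i + 1)` (with no bound on the side of an endpoint): for a
local maximum take a maximiser of `s` on that window. Windows of non-adjacent indices are
disjoint, and adjacent extrema of `s ∘ ι` are of opposite kinds, so the map is injective.
-/

open OrderDual

section

variable {X : Type*} [LinearOrder X] {k : ℕ} {s : ℕ → X}

theorem finite_extSet : (ExtSet k s).Finite :=
  (Set.finite_Iic k).subset fun _ hi => hi.elim (·.1) (·.1)

theorem IsLocMax.not_isLocMax_succ {i : ℕ} (h : IsLocMax k s i) : ¬IsLocMax k s (i + 1) :=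
  fun h' => (h.2.2 (by have := h'.1; omega)).not_gt (h'.2.1 i.succ_ne_zero)

theorem IsLocMax.not_isLocMin {j : ℕ} (h : IsLocMax k s j) (hj : j ≠ k) : ¬IsLocMin k s j :=
  fun h' => (h.2.2 hj).not_gt (h'.2.2 hj)

theorem IsLocMin.not_isLocMin_succ {i : ℕ} (h : IsLocMin k s i) : ¬IsLocMin k s (i + 1) :=
  IsLocMax.not_isLocMax_succ (s := toDual ∘ s) h

theorem exists_isLocMax_between (hs : ∀ i < k, s i ≠ s (i + 1)) {a m b : ℕ}
    (ham : a ≤ m) (hmb : m ≤ b) (hbk : b ≤ k)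
    (ha : a = 0 ∨ s a < s m) (hb : b = k ∨ s b < s m) :
    ∃ j, IsLocMax k s j ∧ (s a < s m → a < j) ∧ (s b < s m → j < b) := by
  obtain ⟨j, hj, hmax⟩ := (Finset.Icc a b).exists_max_image s
    ⟨m, Finset.mem_Icc.mpr ⟨ham, hmb⟩⟩
  rw [Finset.mem_Icc] at hj
  have hmj : s m ≤ s j := hmax m (Finset.mem_Icc.mpr ⟨ham, hmb⟩)
  have haj (h : s a < s m) : a < j :=
    hj.1.lt_of_ne (by rintro rfl; exact (h.trans_le hmj).false)
  have hjb (h : s b < s m) : j < b :=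
    hj.2.lt_of_ne (by rintro rfl; exact (h.trans_le hmj).false)
  refine ⟨j, ⟨hj.2.trans hbk, fun hj0 => ?_, fun hjk => ?_⟩, haj, hjb⟩
  · have hlt : a < j := ha.elim (fun ha0 => by omega) haj
    have hne := hs (j - 1) (by omega)
    rw [Nat.sub_add_cancel (by omega)] at hne
    exact (hmax _ (Finset.mem_Icc.mpr ⟨by omega, by omega⟩)).lt_of_ne hne
  · have hlt : j < b := hb.elim (fun hbk' => by omega) hjb
    exact (hmax _ (Finset.mem_Icc.mpr ⟨by omega, hlt⟩)).lt_of_ne (hs j (by omega)).symm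

variable {k' : ℕ} {ι : ℕ → ℕ}

theorem exists_isLocMax_of_isLocMax_comp (hs : ∀ i < k, s i ≠ s (i + 1))
    (hι : StrictMonoOn ι (Set.Iic k')) (hιk : ι k' ≤ k) {i : ℕ}
    (hi : IsLocMax k' (s ∘ ι) i) :
    ∃ j, IsLocMax k s j ∧ (i ≠ 0 → ι (i - 1) < j) ∧ (i ≠ k' → j < ι (i + 1)) := by
  obtain ⟨hik', hleft, hright⟩ := hi
  have hιi : ι i ≤ k :=
    (hι.monotoneOn (Set.mem_Iic.mpr hik') Set.self_mem_Iic hik').trans hιk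
  obtain ⟨a, hai, ha, hai'⟩ :
      ∃ a ≤ ι i, (a = 0 ∨ s a < s (ι i)) ∧ (i ≠ 0 → a = ι (i - 1)) := by
    by_cases hi0 : i = 0
    · exact ⟨0, Nat.zero_le _, Or.inl rfl, fun h => absurd hi0 h⟩
    · exact ⟨ι (i - 1), (hι (Set.mem_Iic.mpr (by omega)) (by simpa) (by omega)).le,
        Or.inr (hleft hi0), fun _ => rfl⟩
  obtain ⟨b, hib, hbk, hb, hib'⟩ :
      ∃ b, ι i ≤ b ∧ b ≤ k ∧ (b = k ∨ s b < s (ι i)) ∧ (i ≠ k' → b = ι (i + 1)) := by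
    by_cases hik : i = k'
    · exact ⟨k, hιi, le_rfl, Or.inl rfl, fun h => absurd hik h⟩
    · exact ⟨ι (i + 1), (hι (by simpa) (Set.mem_Iic.mpr (by omega)) (by omega)).le,
        (hι.monotoneOn (Set.mem_Iic.mpr (by omega)) Set.self_mem_Iic (by omega)).trans hιk,
        Or.inr (hright hik), fun _ => rfl⟩
  obtain ⟨j, hj, haj, hjb⟩ := exists_isLocMax_between hs hai hib hbk ha hb
  refine ⟨j, hj, fun hi0 => ?_, fun hik => ?_⟩
  · obtain rfl := hai' hi0; exact haj (hleft hi0)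
  · obtain rfl := hib' hik; exact hjb (hright hik)

theorem exists_isLocMin_of_isLocMin_comp (hs : ∀ i < k, s i ≠ s (i + 1))
    (hι : StrictMonoOn ι (Set.Iic k')) (hιk : ι k' ≤ k) {i : ℕ}
    (hi : IsLocMin k' (s ∘ ι) i) :
    ∃ j, IsLocMin k s j ∧ (i ≠ 0 → ι (i - 1) < j) ∧ (i ≠ k' → j < ι (i + 1)) :=
  exists_isLocMax_of_isLocMax_comp (s := toDual ∘ s) hs hι hιk hi

theorem exists_extremum_of_mem_extSet_comp (hs : ∀ i < k, s i ≠ s (i + 1))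
    (hι : StrictMonoOn ι (Set.Iic k')) (hιk : ι k' ≤ k) {i : ℕ}
    (hi : i ∈ ExtSet k' (s ∘ ι)) :
    ∃ j, ((IsLocMax k' (s ∘ ι) i ∧ IsLocMax k s j) ∨ (IsLocMin k' (s ∘ ι) i ∧ IsLocMin k s j))
      ∧ (i ≠ 0 → ι (i - 1) < j) ∧ (i ≠ k' → j < ι (i + 1)) := by
  rcases hi with hmax | hmin
  · obtain ⟨j, hj, hwin⟩ := exists_isLocMax_of_isLocMax_comp hs hι hιk hmax
    exact ⟨j, Or.inl ⟨hmax, hj⟩, hwin⟩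
  · obtain ⟨j, hj, hwin⟩ := exists_isLocMin_of_isLocMin_comp hs hι hιk hmin
    exact ⟨j, Or.inr ⟨hmin, hj⟩, hwin⟩

theorem ne_of_extremum_comp (hι : StrictMonoOn ι (Set.Iic k')) (hιk : ι k' ≤ k)
    {i i' j j' : ℕ} (hii' : i < i') (hi' : i' ≤ k')
    (hj : (IsLocMax k' (s ∘ ι) i ∧ IsLocMax k s j) ∨ (IsLocMin k' (s ∘ ι) i ∧ IsLocMin k s j))
    (hj' : (IsLocMax k' (s ∘ ι) i' ∧ IsLocMax k s j') ∨
      (IsLocMin k' (s ∘ ι) i' ∧ IsLocMin k s j'))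
    (hjlt : j < ι (i + 1)) (hj'gt : ι (i' - 1) < j') : j ≠ j' := by
  rintro rfl
  have hmono := hι.monotoneOn
  obtain rfl | hgap := (show i + 1 ≤ i' from hii').eq_or_lt
  · have hjk : j ≠ k := (hjlt.trans_le ((hmono (by simpa) Set.self_mem_Iic hi').trans hιk)).ne
    rcases hj with ⟨hi, hj⟩ | ⟨hi, hj⟩ <;> rcases hj' with ⟨hi', hj'⟩ | ⟨hi', hj'⟩
    · exact hi.not_isLocMax_succ hi'
    · exact hj.not_isLocMin hjk hj'
    · exact hj'.not_isLocMin hjk hj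
    · exact hi.not_isLocMin_succ hi'
  · have := hmono (Set.mem_Iic.mpr (by omega)) (Set.mem_Iic.mpr (by omega))
      (Nat.le_sub_one_of_lt hgap)
    omega

end

/-- If `s = (s 0, …, s k)` is a finite sequence with distinct consecutive neighbors in a
linearly ordered set and `s' = (s (ι 0), …, s (ι k'))` is a subsequence of `s`
(`ι` strictly increasing on `{0, …, k'}` with `ι k' ≤ k`), then the number of local
extrema of `s'` is at most the number of local extrema of `s`. -/
theorem stmt16 {X : Type*} [LinearOrder X] (k k' : ℕ) (s : ℕ → X)
    (hs : ∀ i : ℕ, i < k → s i ≠ s (i + 1))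
    (ι : ℕ → ℕ) (hι : ∀ i j : ℕ, i < j → j ≤ k' → ι i < ι j) (hιk : ι k' ≤ k) :
    (ExtSet k' (fun i => s (ι i))).ncard ≤ (ExtSet k s).ncard := by
  have hι' : StrictMonoOn ι (Set.Iic k') := fun i _ j hj hij => hι i j hij hj
  choose! f hf using fun i (hi : i ∈ ExtSet k' (s ∘ ι)) =>
    exists_extremum_of_mem_extSet_comp hs hι' hιk hi
  have hlt : ∀ a ∈ ExtSet k' (s ∘ ι), ∀ b ∈ ExtSet k' (s ∘ ι), a < b → f a ≠ f b :=
    fun a ha b hb hab =>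
      have hbk' : b ≤ k' := hb.elim (·.1) (·.1)
      ne_of_extremum_comp hι' hιk hab hbk' (hf a ha).1 (hf b hb).1 ((hf a ha).2.2 (by omega))
        ((hf b hb).2.1 (by omega))
  refine Set.ncard_le_ncard_of_injOn f (fun i hi => ?_) (fun a ha b hb hfab => ?_) finite_extSet
  · rcases (hf i hi).1 with ⟨-, hj⟩ | ⟨-, hj⟩
    exacts [Or.inl hj, Or.inr hj]
  · by_contra hne
    rcases Ne.lt_or_gt hne with h | h
    exacts [hlt a ha b hb h hfab, hlt b hb a ha h hfab.symm]
end
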